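/- For every tournament T, Σ_{(u,v) arc of T} C(u,v)·(C(u,v) − 1) = 2 · r_4(T), where r_4(T) is the number of 4-element subsets of V(T) whose induced subtournament is isomorphic to R₄. -/

import Mathlib

/-!
Summing `C(u,v)(C(u,v) - 1)` over the arcs `u → v` counts ordered pairs of distinct vertices
`w, x` that both close a cyclic triangle on `u → v`. Each unordered such pair is counted twice,
once per orientation, and a quadruple `(u, v, w, x)` with `w → x` is precisely a labelled copy
`![v, w, x, u]` of `R₄`. Since `R₄` has no nontrivial automorphism, labelled copies of `R₄` are
in bijection with the vertex sets inducing `R₄`.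
-/

/-- A tournament on `n` vertices: an irreflexive relation such that for every
pair of distinct vertices exactly one direction holds. -/
structure Tournament (n : ℕ) where
  rel : Fin n → Fin n → Bool
  irrefl : ∀ v, rel v v = false
  total : ∀ u v, u ≠ v → rel u v = !rel v u

/-- The transitive tournament `Tr_k`. -/
def Tr (k : ℕ) : Tournament k where
  rel i j := decide (i < j)
  irrefl v := by simp
  total u v h := by
    rcases lt_or_gt_of_ne h with h' | h'
    · simp [h', h'.le, not_lt_of_gt h']
    · simp [h', h'.le, not_lt_of_gt h']

/-- The cyclic triangle. -/
def C3 : Tournament 3 where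
  rel := ![![false, true, false], ![false, false, true], ![true, false, false]]
  irrefl := by decide
  total := by decide

/-- `W₄`: the non-transitive tournament on 4 vertices with a "winner". -/
def W4 : Tournament 4 where
  rel := ![![false, true, true, true], ![false, false, true, false],
           ![false, false, false, true], ![false, true, false, false]]
  irrefl := by decide
  total := by decide

/-- `L₄`: the non-transitive tournament on 4 vertices with a "loser". -/
def L4 : Tournament 4 where
  rel := ![![false, true, false, true], ![false, false, true, true],
           ![true, false, false, true], ![false, false, false, false]]
  irrefl := by decide
  total := by decide

/-- `R₄`: the tournament on 4 vertices with out-degree sequence (1,1,2,2). -/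
def R4 : Tournament 4 where
  rel := ![![false, true, true, false], ![false, false, true, true],
           ![false, false, false, true], ![true, false, false, false]]
  irrefl := by decide
  total := by decide

/-- Two tournaments on the same number of vertices are isomorphic if some
permutation of the vertices carries one arc relation to the other. -/
def Isomorphic {k : ℕ} (S T : Tournament k) : Prop :=
  ∃ e : Equiv.Perm (Fin k), ∀ i j, S.rel i j = T.rel (e i) (e j)

/-- The subtournament of `T` induced on the subset `A` is isomorphic to `S`. -/
def IsoOn {k n : ℕ} (S : Tournament k) (T : Tournament n) (A : Finset (Fin n)) : Prop :=
  ∃ f : Fin k → Fin n, Function.Injective f ∧ Finset.univ.image f = A ∧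
    ∀ i j, S.rel i j = T.rel (f i) (f j)

open scoped Classical in
/-- The number of `k`-element subsets of the vertex set of `T` whose induced
subtournament is isomorphic to `S` (where `S` has `k` vertices). -/
noncomputable def copyCount {k n : ℕ} (S : Tournament k) (T : Tournament n) : ℕ :=
  ((Finset.powersetCard k (Finset.univ : Finset (Fin n))).filter (IsoOn S T)).card

/-- The (unlabelled) density `p(S, T)`. -/
noncomputable def density {k n : ℕ} (S : Tournament k) (T : Tournament n) : ℝ :=
  (copyCount S T : ℝ) / (n.choose k : ℝ)

/-- The number of automorphisms of a tournament. -/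
def autCount {k : ℕ} (S : Tournament k) : ℕ :=
  (Finset.univ.filter
    (fun e : Equiv.Perm (Fin k) => ∀ i j, S.rel i j = S.rel (e i) (e j))).card

/-- A sequence of tournaments with growing vertex sets is quasi-random if every
fixed tournament `S` on `k` vertices appears with density tending to
`k! / (|Aut S| * 2^(k(k-1)/2))`. -/
def QuasiRandom {nn : ℕ → ℕ} (T : ∀ j, Tournament (nn j)) : Prop :=
  ∀ (k : ℕ) (S : Tournament k),
    Filter.Tendsto (fun j => density S (T j)) Filter.atTop
      (nhds ((k.factorial : ℝ) / ((autCount S : ℝ) * 2 ^ (k * (k - 1) / 2))))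

/-- `D(u,v) = #{w : u→w ∧ w→v}`. -/
def Dcount {n : ℕ} (T : Tournament n) (u v : Fin n) : ℕ :=
  (Finset.univ.filter (fun w => T.rel u w ∧ T.rel w v)).card

/-- `C(u,v) = #{w : v→w ∧ w→u}`. -/
def Ccount {n : ℕ} (T : Tournament n) (u v : Fin n) : ℕ :=
  (Finset.univ.filter (fun w => T.rel v w ∧ T.rel w u)).card

/-- `I(u,v) = #{w : w→u ∧ w→v}`. -/
def Icount {n : ℕ} (T : Tournament n) (u v : Fin n) : ℕ :=
  (Finset.univ.filter (fun w => T.rel w u ∧ T.rel w v)).card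

/-- `O(u,v) = #{w : u→w ∧ v→w}`. -/
def Ocount {n : ℕ} (T : Tournament n) (u v : Fin n) : ℕ :=
  (Finset.univ.filter (fun w => T.rel u w ∧ T.rel v w)).card

/-- The subset `A` induces a transitive subtournament of `T`. -/
def IsTransOn {n : ℕ} (T : Tournament n) (A : Finset (Fin n)) : Prop :=
  ∀ u ∈ A, ∀ v ∈ A, ∀ w ∈ A, T.rel u v → T.rel v w → T.rel u w

open scoped Classical in
/-- `tr_m(T)`: the number of `m`-element subsets of the vertex set of `T`
inducing a transitive subtournament. -/
noncomputable def trCount (m : ℕ) {n : ℕ} (T : Tournament n) : ℕ :=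
  ((Finset.powersetCard m (Finset.univ : Finset (Fin n))).filter (IsTransOn T)).card

/-- The subtournament of `T` induced on a subset `A` of its vertices. -/
noncomputable def induce {n : ℕ} (T : Tournament n) (A : Finset (Fin n)) :
    Tournament A.card where
  rel i j := T.rel (A.orderIsoOfFin rfl i) (A.orderIsoOfFin rfl j)
  irrefl i := T.irrefl _
  total i j h := T.total _ _ (fun hc => h ((A.orderIsoOfFin rfl).injective (Subtype.ext hc)))

/-- The out-neighbourhood `N⁺(u)` of a vertex. -/
def outSet {n : ℕ} (T : Tournament n) (u : Fin n) : Finset (Fin n) :=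
  Finset.univ.filter (fun w => T.rel u w)

/-- The out-degree of a vertex. -/
def outDeg {n : ℕ} (T : Tournament n) (v : Fin n) : ℕ :=
  (Finset.univ.filter (fun w => T.rel v w)).card

/-- The multiset of out-degrees of a tournament. -/
def outDegs {n : ℕ} (T : Tournament n) : Multiset ℕ :=
  Finset.univ.val.map (outDeg T)

/-- The arc relation of `T` is transitive. -/
def IsTransitiveT {k : ℕ} (S : Tournament k) : Prop :=
  ∀ u v w, S.rel u v → S.rel v w → S.rel u w

namespace Tournament

variable {k n : ℕ}

theorem ne_of_rel (T : Tournament n) {u v : Fin n} (h : T.rel u v) : u ≠ v := by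
  rintro rfl
  simp [T.irrefl] at h

theorem not_rel_iff (T : Tournament n) {u v : Fin n} (hne : u ≠ v) :
    ¬T.rel u v ↔ T.rel v u := by
  simp [T.total u v hne]

theorem card_offDiag_eq_two_mul_card_arcs (T : Tournament n) (s : Finset (Fin n)) :
    s.offDiag.card = 2 * (s.offDiag.filter fun p => T.rel p.1 p.2).card := by
  rw [← Finset.card_filter_add_card_filter_not (fun p => T.rel p.1 p.2), two_mul]
  congr 1
  refine Finset.card_nbij' Prod.swap Prod.swap ?_ ?_ (fun _ _ => rfl) (fun _ _ => rfl) <;>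
    simp only [Finset.coe_filter, Finset.mem_offDiag] <;> rintro ⟨u, v⟩ ⟨⟨hu, hv, huv⟩, h⟩
  · exact ⟨⟨hv, hu, huv.symm⟩, (T.not_rel_iff huv).1 h⟩
  · exact ⟨⟨hv, hu, huv.symm⟩, (T.not_rel_iff huv.symm).2 h⟩

theorem forall_rel_eq_iff_forall_rel_imp {S : Tournament k} {T : Tournament n} {f : Fin k → Fin n} :
    (∀ i j, S.rel i j = T.rel (f i) (f j)) ↔ ∀ i j, S.rel i j → T.rel (f i) (f j) := by
  refine ⟨fun h i j hij => h i j ▸ hij, fun h i j => ?_⟩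
  by_cases hij : i = j
  · simp [hij, S.irrefl, T.irrefl]
  cases hs : S.rel i j
  · have hji := h j i ((S.not_rel_iff hij).1 (by simp [hs]))
    simpa using (T.not_rel_iff (T.ne_of_rel hji).symm).2 hji
  · exact (h i j hs).symm

/-- The labelled copies of `S` in `T` (such maps are automatically injective). -/
def embeddings (S : Tournament k) (T : Tournament n) : Finset (Fin k → Fin n) :=
  Finset.univ.filter fun f => ∀ i j, S.rel i j = T.rel (f i) (f j)

theorem mem_embeddings {S : Tournament k} {T : Tournament n} {f : Fin k → Fin n} :
    f ∈ embeddings S T ↔ ∀ i j, S.rel i j = T.rel (f i) (f j) := by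
  simp [embeddings]

theorem injective_of_rel_eq {S : Tournament k} {T : Tournament n} {f : Fin k → Fin n}
    (hf : ∀ i j, S.rel i j = T.rel (f i) (f j)) : Function.Injective f := by
  intro i j hij
  by_contra hne
  have h := S.not_rel_iff hne
  simp [hf, hij, T.irrefl] at h

def IsRigid (S : Tournament k) : Prop :=
  ∀ σ : Fin k → Fin k, (∀ i j, S.rel i j = S.rel (σ i) (σ j)) → σ = id

theorem copyCount_eq_card_embeddings {S : Tournament k} (hS : S.IsRigid) (T : Tournament n) :
    copyCount S T = (embeddings S T).card := by
  classical
  symm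
  refine Finset.card_nbij (fun f => Finset.univ.image f) ?_ ?_ ?_
  · intro f hf
    rw [Finset.mem_coe, mem_embeddings] at hf
    rw [Finset.mem_coe, Finset.mem_filter, Finset.mem_powersetCard]
    have hinj := injective_of_rel_eq hf
    exact ⟨⟨Finset.subset_univ _, by simp [Finset.card_image_of_injective _ hinj]⟩, f, hinj, rfl, hf⟩
  · intro f hf g hg himg
    rw [Finset.mem_coe, mem_embeddings] at hf hg
    have hσ (i : Fin k) : ∃ j, f j = g i := by
      have hi : g i ∈ Finset.univ.image g := Finset.mem_image_of_mem g (Finset.mem_univ i)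
      simpa [← himg] using hi
    choose σ hσ using hσ
    have : σ = id := hS σ fun i j => by rw [hg, ← hσ, ← hσ, ← hf]
    rw [← funext hσ, this]; rfl
  · intro A hA
    rw [Finset.mem_coe, Finset.mem_filter] at hA
    obtain ⟨-, f, -, rfl, hf⟩ := hA
    exact ⟨f, mem_embeddings.2 hf, rfl⟩

theorem isRigid_R4 : IsRigid R4 := by
  intro σ hσ
  -- out-degrees `2, 2, 1, 1` and the arcs `0 → 1`, `2 → 3` pin down every vertex
  have : ∀ a b c d : Fin 4, (∀ i j, R4.rel i j = R4.rel (![a, b, c, d] i) (![a, b, c, d] j)) →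
      a = 0 ∧ b = 1 ∧ c = 2 ∧ d = 3 := by decide
  have hσ4 : ![σ 0, σ 1, σ 2, σ 3] = σ := by ext i; fin_cases i <;> rfl
  obtain ⟨h0, h1, h2, h3⟩ := this _ _ _ _ (hσ4 ▸ hσ)
  ext i; fin_cases i
  exacts [congrArg Fin.val h0, congrArg Fin.val h1, congrArg Fin.val h2, congrArg Fin.val h3]

def cSet (T : Tournament n) (u v : Fin n) : Finset (Fin n) :=
  Finset.univ.filter fun w => T.rel v w ∧ T.rel w u

theorem Ccount_mul_sub_one (T : Tournament n) (u v : Fin n) :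
    Ccount T u v * (Ccount T u v - 1) =
      2 * ((cSet T u v).offDiag.filter fun p => T.rel p.1 p.2).card := by
  rw [← card_offDiag_eq_two_mul_card_arcs, Finset.offDiag_card, Nat.mul_sub_one]
  rfl

theorem mem_embeddings_R4 {T : Tournament n} {f : Fin 4 → Fin n} :
    f ∈ embeddings R4 T ↔ T.rel (f 0) (f 1) ∧ T.rel (f 0) (f 2) ∧ T.rel (f 1) (f 2) ∧
      T.rel (f 1) (f 3) ∧ T.rel (f 2) (f 3) ∧ T.rel (f 3) (f 0) := by
  rw [mem_embeddings, forall_rel_eq_iff_forall_rel_imp]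
  simp [Fin.forall_fin_succ, R4, and_assoc]

theorem card_embeddings_R4 (T : Tournament n) :
    (embeddings R4 T).card = ∑ u, ∑ v,
      if T.rel u v then ((cSet T u v).offDiag.filter fun p => T.rel p.1 p.2).card else 0 := by
  rw [← Fintype.sum_prod_type', ← Finset.sum_filter, ← Finset.card_sigma]
  refine Finset.card_nbij' (fun f => ⟨(f 3, f 0), (f 1, f 2)⟩)
    (fun q => ![q.1.2, q.2.1, q.2.2, q.1.1]) ?_ ?_ ?_ (fun _ _ => rfl)
  · intro f hf
    obtain ⟨h01, h02, h12, h13, h23, h30⟩ := mem_embeddings_R4.1 hf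
    simp only [Finset.coe_sigma, Set.mem_sigma_iff, Finset.coe_filter, Finset.mem_offDiag,
      cSet, Finset.mem_filter, Finset.mem_univ, true_and, Set.mem_ofPred_eq]
    exact ⟨h30, ⟨⟨h01, h13⟩, ⟨h02, h23⟩, T.ne_of_rel h12⟩, h12⟩
  · rintro ⟨⟨u, v⟩, w, x⟩ hq
    simp only [Finset.coe_sigma, Set.mem_sigma_iff, Finset.coe_filter, Finset.mem_offDiag,
      cSet, Finset.mem_filter, Finset.mem_univ, true_and, Set.mem_ofPred_eq] at hq
    obtain ⟨huv, ⟨⟨hvw, hwu⟩, ⟨hvx, hxu⟩, -⟩, hwx⟩ := hq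
    exact mem_embeddings_R4.2 ⟨hvw, hvx, hwx, hwu, hxu, huv⟩
  · intro f _
    ext i; fin_cases i <;> rfl

end Tournament

/-- `Σ_{arcs (u,v)} C(u,v)(C(u,v)-1) = 2 · r₄(T)`. -/
theorem sum_C_pairs_eq_two_r4 (n : ℕ) (T : Tournament n) :
    (∑ u, ∑ v, if T.rel u v then Ccount T u v * (Ccount T u v - 1) else 0) =
      2 * copyCount R4 T := by
  simp only [Tournament.Ccount_mul_sub_one,
    Tournament.copyCount_eq_card_embeddings Tournament.isRigid_R4, Tournament.card_embeddings_R4,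
    Finset.mul_sum, mul_ite, mul_zero]
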